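/- Let u : ℝ → ℝ be continuous and 1-periodic, and let 0 < a < b < 1 be such that u(x) = −1 for every x ∈ [a,b]. Suppose that ∫₀¹ 𝒢′(b−y)·(u(y) + u(y)²/2) dy ≤ ∫₀¹ 𝒢′(a−y)·(u(y) + u(y)²/2) dy. Then u(x) = −1 for every x ∈ ℝ. -/

import Mathlib

open MeasureTheory Real

/-- The 1-periodic kernel `𝒢′(x) = sinh(x - ⌊x⌋ - 1/2)/(2 sinh(1/2))`, the derivative of the
periodic Green's function of `1 - d²/dx²` on the circle `ℝ/ℤ`. -/
noncomputable def bbmGper' (x : ℝ) : ℝ :=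
  Real.sinh (x - ↑⌊x⌋ - 1 / 2) / (2 * Real.sinh (1 / 2))

/-!
Write `f = u + u²/2 = (u + 1)²/2 - 1/2` and `K(y) = 𝒢′(a - y) - 𝒢′(b - y)`. Since `𝒢′` has mean
zero over a period, so does `K`, and the hypothesis becomes `∫₀¹ K (u + 1)²/2 ≥ 0`. But on
`(0,1] \ [a,b]` both arguments `a - y < b - y` lie in the same interval of continuity of `𝒢′`,
where it is strictly increasing, so `K < 0` there, while `(u + 1)² = 0` on `[a,b]`. Hence
`K (u + 1)²` is nonpositive on `(0,1]` with nonnegative integral, so it vanishes a.e.; since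
`K ≠ 0` off `[a,b]`, `u = -1` a.e. on `(0,1)`, and continuity and periodicity spread this to `ℝ`.
-/

open Set

lemma Function.Periodic.eq_const_of_eqOn_Ioo {α : Type*} [TopologicalSpace α] [T2Space α]
    {f : ℝ → α} {T : ℝ} {c : α} (hf : Continuous f) (hper : Function.Periodic f T) (hT : 0 < T)
    (h : EqOn f (fun _ => c) (Ioo 0 T)) (x : ℝ) : f x = c := by
  have hIcc : Icc 0 T ⊆ {x | f x = c} := by
    rw [← closure_Ioo hT.ne]
    exact (isClosed_eq hf continuous_const).closure_subset_iff.2 h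
  obtain ⟨y, hy, hxy⟩ := hper.exists_mem_Ico₀ hT x
  exact hxy ▸ hIcc (Ico_subset_Icc_self hy)

lemma ae_restrict_eq_zero_of_nonpos_of_setIntegral_nonneg {X : Type*} [MeasurableSpace X]
    {μ : Measure X} {s : Set X} {f : X → ℝ} (hs : MeasurableSet s) (hfi : IntegrableOn f s μ)
    (hf : ∀ x ∈ s, f x ≤ 0) (h : 0 ≤ ∫ x in s, f x ∂μ) : f =ᵐ[μ.restrict s] 0 := by
  have hneg : -f =ᵐ[μ.restrict s] 0 := by
    refine (setIntegral_eq_zero_iff_of_nonneg_ae ?_ hfi.neg).1 ?_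
    · exact (ae_restrict_iff' hs).2 (ae_of_all _ fun x hx => neg_nonneg.2 (hf x hx))
    · rw [Pi.neg_def, integral_neg, (setIntegral_nonpos hs hf).antisymm h, neg_zero]
  filter_upwards [hneg] with x hx
  simpa using hx

lemma bbmGper'_periodic : Function.Periodic bbmGper' 1 := fun x => by
  simp only [bbmGper', Int.floor_add_one, Int.cast_add, Int.cast_one, add_sub_add_right_eq_sub]

lemma bbmGper'_of_mem_Ico {x : ℝ} (hx : x ∈ Ico 0 1) :
    bbmGper' x = sinh (x - 1 / 2) / (2 * sinh (1 / 2)) := by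
  simp [bbmGper', Int.floor_eq_zero_iff.2 hx]

lemma bbmGper'_lt_of_floor_eq {x y : ℝ} (hfl : ⌊x⌋ = ⌊y⌋) (hxy : x < y) :
    bbmGper' x < bbmGper' y := by
  have hs : 0 < 2 * sinh (1 / 2) := by positivity
  rw [bbmGper', bbmGper', hfl]
  exact div_lt_div_of_pos_right (sinh_lt_sinh.2 (by linarith)) hs

lemma abs_bbmGper'_le (x : ℝ) : |bbmGper' x| ≤ 1 / 2 := by
  have hs : 0 < 2 * sinh (1 / 2) := by positivity
  have hsinh : |sinh (Int.fract x - 1 / 2)| ≤ sinh (1 / 2) := by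
    rw [abs_sinh, sinh_le_sinh, abs_le]
    constructor <;> linarith [Int.fract_nonneg x, Int.fract_lt_one x]
  rw [bbmGper', ← Int.fract, abs_div, abs_of_pos hs, div_le_iff₀ hs]
  linarith

lemma measurable_bbmGper' : Measurable bbmGper' :=
  (continuous_sinh.measurable.comp (measurable_fract.sub measurable_const)).div_const _

lemma intervalIntegrable_bbmGper'_sub (c p q : ℝ) :
    IntervalIntegrable (fun y => bbmGper' (c - y)) volume p q := by
  rw [intervalIntegrable_iff]
  refine Measure.integrableOn_of_bounded (M := 1 / 2) measure_Ioc_lt_top.ne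
    (measurable_bbmGper'.comp (measurable_const.sub measurable_id)).aestronglyMeasurable ?_
  exact ae_of_all _ fun y => by simpa using abs_bbmGper'_le (c - y)

lemma integral_bbmGper' : ∫ x in (0 : ℝ)..1, bbmGper' x = 0 := by
  have hG : EqOn bbmGper' (fun x => sinh (x - 1 / 2) / (2 * sinh (1 / 2))) (Ioo 0 1) :=
    fun x hx => bbmGper'_of_mem_Ico (Ioo_subset_Ico_self hx)
  have hsinh (p q : ℝ) : ∫ x in p..q, sinh x = cosh q - cosh p :=
    intervalIntegral.integral_eq_sub_of_hasDerivAt (fun x _ => hasDerivAt_cosh x)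
      (continuous_sinh.intervalIntegrable p q)
  rw [intervalIntegral.integral_of_le zero_le_one, integral_Ioc_eq_integral_Ioo,
    setIntegral_congr_fun measurableSet_Ioo hG, ← integral_Ioc_eq_integral_Ioo,
    ← intervalIntegral.integral_of_le zero_le_one, intervalIntegral.integral_div,
    intervalIntegral.integral_comp_sub_right (fun x => sinh x), hsinh]
  norm_num

lemma integral_bbmGper'_sub (c : ℝ) : ∫ y in (0 : ℝ)..1, bbmGper' (c - y) = 0 := by
  have hshift := bbmGper'_periodic.intervalIntegral_add_eq (c - 1) 0
  rw [sub_add_cancel, zero_add, integral_bbmGper'] at hshift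
  rwa [intervalIntegral.integral_comp_sub_left, sub_zero]

lemma integral_bbmGper'_sub_mul_add_const (c k : ℝ) {φ : ℝ → ℝ}
    (hφ : ContinuousOn φ (uIcc 0 1)) :
    ∫ y in (0 : ℝ)..1, bbmGper' (c - y) * (φ y + k) =
      ∫ y in (0 : ℝ)..1, bbmGper' (c - y) * φ y := by
  simp_rw [mul_add]
  rw [intervalIntegral.integral_add ((intervalIntegrable_bbmGper'_sub c 0 1).mul_continuousOn hφ)
    ((intervalIntegrable_bbmGper'_sub c 0 1).mul_const k), intervalIntegral.integral_mul_const,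
    integral_bbmGper'_sub, zero_mul, add_zero]

lemma bbmGper'_sub_lt_of_mem {a b y : ℝ} (h0a : 0 < a) (hab : a < b) (hb1 : b < 1)
    (hy : y ∈ Ioc 0 1 \ Icc a b) : bbmGper' (a - y) < bbmGper' (b - y) := by
  refine bbmGper'_lt_of_floor_eq ?_ (by linarith)
  obtain ⟨⟨hy0, hy1⟩, hyab⟩ := hy
  rcases lt_or_ge y a with hya | hay
  · rw [Int.floor_eq_zero_iff.2 ⟨by linarith, by linarith⟩,
      Int.floor_eq_zero_iff.2 ⟨by linarith, by linarith⟩]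
  · have hby : b < y := lt_of_not_ge fun hyb => hyab ⟨hay, hyb⟩
    rw [(Int.floor_eq_iff (z := -1)).2 ⟨by push_cast; linarith, by push_cast; linarith⟩,
      (Int.floor_eq_iff (z := -1)).2 ⟨by push_cast; linarith, by push_cast; linarith⟩]

/-- Time-slice unique continuation for the periodic BBM: if a continuous 1-periodic `u` equals
`-1` on `[a,b] ⊂ (0,1)` and `∫₀¹ 𝒢′(b-y)(u+u²/2) dy ≤ ∫₀¹ 𝒢′(a-y)(u+u²/2) dy`
(i.e. `∂ₜu(b,t₀) ≥ ∂ₜu(a,t₀)`), then `u ≡ -1`. -/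
theorem bbm_unique_continuation_periodic (u : ℝ → ℝ)
    (hcont : Continuous u) (hper : Function.Periodic u 1)
    (a b : ℝ) (h0a : 0 < a) (hab : a < b) (hb1 : b < 1)
    (hm1 : ∀ x ∈ Set.Icc a b, u x = -1)
    (hineq : (∫ y in (0:ℝ)..1, bbmGper' (b - y) * (u y + u y ^ 2 / 2)) ≤
      ∫ y in (0:ℝ)..1, bbmGper' (a - y) * (u y + u y ^ 2 / 2)) :
    ∀ x : ℝ, u x = -1 := by
  set K : ℝ → ℝ := fun y => bbmGper' (a - y) - bbmGper' (b - y)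
  set g : ℝ → ℝ := fun y => (u y + 1) ^ 2 / 2
  have hK_neg : ∀ y ∈ Ioc 0 1 \ Icc a b, K y < 0 := fun y hy =>
    sub_neg.2 (bbmGper'_sub_lt_of_mem h0a hab hb1 hy)
  have hKgi : IntervalIntegrable (fun y => K y * g y) volume 0 1 :=
    ((intervalIntegrable_bbmGper'_sub a 0 1).sub
      (intervalIntegrable_bbmGper'_sub b 0 1)).mul_continuousOn (by fun_prop)
  have hf_eq (c : ℝ) : ∫ y in (0 : ℝ)..1, bbmGper' (c - y) * (u y + u y ^ 2 / 2) =
      ∫ y in (0 : ℝ)..1, bbmGper' (c - y) * g y := by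
    refine (intervalIntegral.integral_congr fun y _ => ?_).trans
      (integral_bbmGper'_sub_mul_add_const c (-1 / 2) (φ := g) (by fun_prop))
    simp only [g]
    ring
  have hKg_nonneg : 0 ≤ ∫ y in Ioc 0 1, K y * g y := by
    have hgi (c : ℝ) := (intervalIntegrable_bbmGper'_sub c 0 1).mul_continuousOn
      (g := g) (by fun_prop)
    simp_rw [← intervalIntegral.integral_of_le zero_le_one, K, sub_mul]
    rw [intervalIntegral.integral_sub (hgi a) (hgi b), ← hf_eq, ← hf_eq]
    exact sub_nonneg.2 hineq
  have hKg_nonpos : ∀ y ∈ Ioc 0 1, K y * g y ≤ 0 := by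
    intro y hy
    by_cases hyab : y ∈ Icc a b
    · simp [g, hm1 y hyab]
    · exact mul_nonpos_of_nonpos_of_nonneg (hK_neg y ⟨hy, hyab⟩).le (by positivity)
  have hKg_ae := ae_restrict_eq_zero_of_nonpos_of_setIntegral_nonneg measurableSet_Ioc
    hKgi.1 hKg_nonpos hKg_nonneg
  have hu_ae : u =ᵐ[volume.restrict (Ioo 0 1)] fun _ => -1 := by
    refine ae_restrict_of_ae_restrict_of_subset Ioo_subset_Ioc_self ?_
    filter_upwards [hKg_ae, ae_restrict_mem measurableSet_Ioc] with y hy hy01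
    by_cases hyab : y ∈ Icc a b
    · exact hm1 y hyab
    · have hgy := (mul_eq_zero.1 hy).resolve_left (hK_neg y ⟨hy01, hyab⟩).ne
      have : u y + 1 = 0 := by simpa [g] using hgy
      linarith
  exact hper.eq_const_of_eqOn_Ioo hcont one_pos
    (Measure.eqOn_open_of_ae_eq hu_ae isOpen_Ioo hcont.continuousOn continuousOn_const)
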